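/- arXiv:2101.11879 — 5 statements merged into one kernel-verified Lean document; each statement's English description precedes it below -/
import Mathlib

section
/- Let A, B ∈ ℝ with A ≠ 0 and let U ⊆ ℝ be an open set on which cos(A·x/2 + B) ≠ 0. Define f : U → ℝ by f(x) = log(1 + tan(A·x/2 + B)²). Then f satisfies the third-order ODE f'·f'' − f''' = 0 on U, and f' is not identically zero. -/
/-!
With `u = A x / 2 + B` we have `f = log (1 + tan² u)` and `f' = A tan u`. Since `tan' = 1 + tan²`,
`g = f'` solves the Riccati equation `g' = A² / 2 + g² / 2` wherever `cos u ≠ 0`; differentiating it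
once more gives `g'' = g g'`, which is `f''' = f' f''`. Moreover `g' ≥ A² / 2 > 0`, so `f'` cannot
vanish on a nonempty open set.
-/

open Real Filter Topology

theorem Real.hasDerivAt_tan_one_add_sq {x : ℝ} (hx : cos x ≠ 0) :
    HasDerivAt tan (1 + tan x ^ 2) x := by
  rw [← inv_inv (1 + tan x ^ 2), inv_one_add_tan_sq hx, ← one_div]
  exact hasDerivAt_tan hx

theorem hasDerivAt_log_one_add_tan_sq_comp {u : ℝ → ℝ} {a x : ℝ} (hu : HasDerivAt u a x)
    (hx : cos (u x) ≠ 0) :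
    HasDerivAt (fun y => log (1 + tan (u y) ^ 2)) (2 * a * tan (u x)) x := by
  have htan : HasDerivAt (fun y => tan (u y)) ((1 + tan (u x) ^ 2) * a) x :=
    (hasDerivAt_tan_one_add_sq hx).comp x hu
  have hpos : 0 < 1 + tan (u x) ^ 2 := by positivity
  refine (((htan.pow 2).const_add 1).log hpos.ne').congr_deriv ?_
  simp only [Pi.pow_apply]
  field_simp
  ring

theorem deriv_deriv_eq_mul_deriv_of_riccati {g : ℝ → ℝ} {c : ℝ} {S : Set ℝ} (hS : IsOpen S)
    (hg : ∀ x ∈ S, HasDerivAt g (c + g x ^ 2 / 2) x) {x : ℝ} (hx : x ∈ S) :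
    deriv (deriv g) x = g x * deriv g x := by
  have hderiv : deriv g =ᶠ[𝓝 x] fun y => c + g y ^ 2 / 2 :=
    eventually_of_mem (hS.mem_nhds hx) fun y hy => (hg y hy).deriv
  rw [hderiv.deriv_eq]
  have hsq := (((hg x hx).differentiableAt.hasDerivAt.pow 2).div_const 2).const_add c
  refine hsq.deriv.trans ?_
  simp only [Nat.cast_ofNat, Nat.add_one_sub_one, pow_one]
  ring

theorem hasDerivAt_deriv_log_one_add_tan_sq_comp {u : ℝ → ℝ} {a : ℝ} (hu : ∀ x, HasDerivAt u a x)
    {x : ℝ} (hx : cos (u x) ≠ 0) :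
    HasDerivAt (deriv fun y => log (1 + tan (u y) ^ 2))
      (2 * a ^ 2 + deriv (fun y => log (1 + tan (u y) ^ 2)) x ^ 2 / 2) x := by
  have hS : IsOpen {y | cos (u y) ≠ 0} :=
    isOpen_ne_fun (continuous_cos.comp (continuous_iff_continuousAt.2 fun y => (hu y).continuousAt))
      continuous_const
  have hderiv : (deriv fun y => log (1 + tan (u y) ^ 2)) =ᶠ[𝓝 x] fun y => 2 * a * tan (u y) :=
    eventually_of_mem (hS.mem_nhds hx) fun y hy =>
      (hasDerivAt_log_one_add_tan_sq_comp (hu y) hy).deriv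
  rw [(hasDerivAt_log_one_add_tan_sq_comp (hu x) hx).deriv]
  refine HasDerivAt.congr_of_eventuallyEq ?_ hderiv
  have htan : HasDerivAt (fun y => tan (u y)) ((1 + tan (u x) ^ 2) * a) x :=
    (hasDerivAt_tan_one_add_sq hx).comp x (hu x)
  exact (htan.const_mul (2 * a)).congr_deriv (by ring)

theorem stmt2 (A B : ℝ) (hA : A ≠ 0) (U : Set ℝ) (hU : IsOpen U) (hne : U.Nonempty)
    (hcos : ∀ x ∈ U, Real.cos (A * x / 2 + B) ≠ 0) :
    (∀ x ∈ U,
      deriv (fun x => Real.log (1 + Real.tan (A * x / 2 + B)^2)) x *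
        deriv (deriv (fun x => Real.log (1 + Real.tan (A * x / 2 + B)^2))) x -
        deriv (deriv (deriv (fun x => Real.log (1 + Real.tan (A * x / 2 + B)^2)))) x = 0) ∧
    ¬ (∀ x ∈ U, deriv (fun x => Real.log (1 + Real.tan (A * x / 2 + B)^2)) x = 0) := by
  have hu (x : ℝ) : HasDerivAt (fun x => A * x / 2 + B) (A / 2) x := by
    simpa using (((hasDerivAt_id x).const_mul A).div_const 2).add_const B
  have hriccati (x : ℝ) (hx : x ∈ U) := hasDerivAt_deriv_log_one_add_tan_sq_comp hu (hcos x hx)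
  refine ⟨fun x hx => ?_, fun hzero => ?_⟩
  · rw [deriv_deriv_eq_mul_deriv_of_riccati hU hriccati hx]
    ring
  · obtain ⟨x₀, hx₀⟩ := hne
    have hlocal : (deriv fun x => log (1 + tan (A * x / 2 + B) ^ 2)) =ᶠ[𝓝 x₀] fun _ => 0 :=
      eventually_of_mem (hU.mem_nhds hx₀) hzero
    have h0 := (hriccati x₀ hx₀).deriv
    rw [hlocal.deriv_eq, deriv_const, hzero x₀ hx₀] at h0
    have hA2 : 0 < A ^ 2 := by positivity
    linarith
end

section
/- Let A, B, θ ∈ ℝ with A ≠ 0, set u(x,y) = A·(cos θ·x + sin θ·y) + B, and let U ⊆ ℝ² be an open set on which cos(u(x,y)) ≠ 0. Define f : U → ℝ by f(x,y) = log(1 + tan(u(x,y))²). Then f satisfies the two equations f_x·f_{xx} + f_y·f_{xy} − f_{xxx} − f_{xyy} = 0 and f_x·f_{yx} + f_y·f_{yy} − f_{yxx} − f_{yyy} = 0 on U. -/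
noncomputable def dx (f : ℝ → ℝ → ℝ) : ℝ → ℝ → ℝ := fun x y => deriv (fun t => f t y) x
noncomputable def dy (f : ℝ → ℝ → ℝ) : ℝ → ℝ → ℝ := fun x y => deriv (fun t => f x t) y

/-- `E₁ f = f_x f_xx + f_y f_xy - f_xxx - f_xyy` (this is `D₁(λ,f)` for `λ` constant). -/
noncomputable def E1 (f : ℝ → ℝ → ℝ) : ℝ → ℝ → ℝ := fun x y =>
  dx f x y * dx (dx f) x y + dy f x y * dy (dx f) x y
    - dx (dx (dx f)) x y - dy (dy (dx f)) x y

/-- `E₂ f = f_x f_yx + f_y f_yy - f_yxx - f_yyy` (this is `D₂(λ,f)` for `λ` constant). -/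
noncomputable def E2 (f : ℝ → ℝ → ℝ) : ℝ → ℝ → ℝ := fun x y =>
  dx f x y * dx (dy f) x y + dy f x y * dy (dy f) x y
    - dx (dx (dy f)) x y - dy (dy (dy f)) x y

/-!
The function is a ridge function `φ (a x + b y + k)` with `φ = log (1 + tan²)`. Since `deriv`
commutes with precomposition by an affine map unconditionally, the partial derivatives of a ridge
function are ridge functions of the derivatives of `φ`, and `E₁`, `E₂` reduce to
`a (a² + b²) (φ' φ'' - φ''')` and `b (a² + b²) (φ' φ'' - φ''')`. Finally `φ' = 2 tan`,
`φ'' = 2 (1 + tan²)` and `φ''' = 4 tan (1 + tan²) = φ' φ''` wherever `cos ≠ 0`.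
-/

open Real Topology

def ridge (φ : ℝ → ℝ) (a b k : ℝ) : ℝ → ℝ → ℝ := fun x y => φ (a * x + b * y + k)

lemma deriv_comp_mul_add (φ : ℝ → ℝ) (a c x : ℝ) :
    deriv (fun t => φ (a * t + c)) x = a * deriv φ (a * x + c) := by
  rw [deriv_comp_mul_left a (fun s => φ (s + c)), deriv_comp_add_const, smul_eq_mul]

lemma dx_smul (c : ℝ) (F : ℝ → ℝ → ℝ) : dx (c • F) = c • dx F := by
  funext x y
  exact deriv_const_mul_field c

lemma dy_smul (c : ℝ) (F : ℝ → ℝ → ℝ) : dy (c • F) = c • dy F := by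
  funext x y
  exact deriv_const_mul_field c

lemma dx_ridge (φ : ℝ → ℝ) (a b k : ℝ) : dx (ridge φ a b k) = a • ridge (deriv φ) a b k := by
  funext x y
  simp only [dx, ridge, add_assoc, deriv_comp_mul_add, Pi.smul_apply, smul_eq_mul]

lemma dy_ridge (φ : ℝ → ℝ) (a b k : ℝ) : dy (ridge φ a b k) = b • ridge (deriv φ) a b k := by
  funext x y
  have h : ∀ t, a * x + b * t + k = b * t + (a * x + k) := fun t => by ring
  simp only [dy, ridge, h, deriv_comp_mul_add, Pi.smul_apply, smul_eq_mul]

lemma E1_ridge (φ : ℝ → ℝ) (a b k x y : ℝ) :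
    E1 (ridge φ a b k) x y = a * (a ^ 2 + b ^ 2) *
      (deriv φ (a * x + b * y + k) * deriv^[2] φ (a * x + b * y + k)
        - deriv^[3] φ (a * x + b * y + k)) := by
  simp only [E1, dx_ridge, dy_ridge, dx_smul, dy_smul, Pi.smul_apply, smul_eq_mul, ridge,
    Function.iterate_succ, Function.iterate_zero, Function.comp_apply, Function.id_def]
  ring

lemma E2_ridge (φ : ℝ → ℝ) (a b k x y : ℝ) :
    E2 (ridge φ a b k) x y = b * (a ^ 2 + b ^ 2) *
      (deriv φ (a * x + b * y + k) * deriv^[2] φ (a * x + b * y + k)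
        - deriv^[3] φ (a * x + b * y + k)) := by
  simp only [E2, dx_ridge, dy_ridge, dx_smul, dy_smul, Pi.smul_apply, smul_eq_mul, ridge,
    Function.iterate_succ, Function.iterate_zero, Function.comp_apply, Function.id_def]
  ring

lemma eventually_cos_ne_zero {w : ℝ} (h : cos w ≠ 0) : ∀ᶠ v in 𝓝 w, cos v ≠ 0 :=
  continuous_cos.continuousAt.eventually_ne h

lemma hasDerivAt_tan_of_cos_ne_zero {w : ℝ} (h : cos w ≠ 0) :
    HasDerivAt tan (1 + tan w ^ 2) w := by
  simpa [← inv_one_add_tan_sq h] using hasDerivAt_tan h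

lemma hasDerivAt_one_add_tan_sq {w : ℝ} (h : cos w ≠ 0) :
    HasDerivAt (fun v => 1 + tan v ^ 2) (2 * tan w * (1 + tan w ^ 2)) w := by
  simpa using ((hasDerivAt_tan_of_cos_ne_zero h).pow 2).const_add 1

lemma deriv_log_one_add_tan_sq {w : ℝ} (h : cos w ≠ 0) :
    deriv (fun v => log (1 + tan v ^ 2)) w = 2 * tan w := by
  rw [((hasDerivAt_one_add_tan_sq h).log (by positivity)).deriv]
  field_simp

lemma iter_deriv_two_log_one_add_tan_sq {w : ℝ} (h : cos w ≠ 0) :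
    deriv^[2] (fun v => log (1 + tan v ^ 2)) w = 2 * (1 + tan w ^ 2) := by
  have h' : deriv (fun v => log (1 + tan v ^ 2)) =ᶠ[𝓝 w] fun v => 2 * tan v :=
    (eventually_cos_ne_zero h).mono fun v hv => deriv_log_one_add_tan_sq hv
  rw [Function.iterate_succ_apply', Function.iterate_one, h'.deriv_eq,
    ((hasDerivAt_tan_of_cos_ne_zero h).const_mul 2).deriv]

lemma iter_deriv_three_log_one_add_tan_sq {w : ℝ} (h : cos w ≠ 0) :
    deriv^[3] (fun v => log (1 + tan v ^ 2)) w =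
      deriv (fun v => log (1 + tan v ^ 2)) w * deriv^[2] (fun v => log (1 + tan v ^ 2)) w := by
  have h' : deriv^[2] (fun v => log (1 + tan v ^ 2)) =ᶠ[𝓝 w] fun v => 2 * (1 + tan v ^ 2) :=
    (eventually_cos_ne_zero h).mono fun v hv => iter_deriv_two_log_one_add_tan_sq hv
  rw [Function.iterate_succ_apply', h'.deriv_eq, ((hasDerivAt_one_add_tan_sq h).const_mul 2).deriv,
    deriv_log_one_add_tan_sq h, iter_deriv_two_log_one_add_tan_sq h]
  ring

theorem stmt4_general (A B θ : ℝ) (U : Set (ℝ × ℝ))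
    (hcos : ∀ p ∈ U, Real.cos (A * (Real.cos θ * p.1 + Real.sin θ * p.2) + B) ≠ 0) :
    ∀ p ∈ U,
      E1 (fun x y => Real.log (1 + Real.tan (A * (Real.cos θ * x + Real.sin θ * y) + B)^2)) p.1 p.2 = 0 ∧
      E2 (fun x y => Real.log (1 + Real.tan (A * (Real.cos θ * x + Real.sin θ * y) + B)^2)) p.1 p.2 = 0 := by
  intro p hp
  have hridge : (fun x y => log (1 + tan (A * (cos θ * x + sin θ * y) + B) ^ 2)) =
      ridge (fun w => log (1 + tan w ^ 2)) (A * cos θ) (A * sin θ) B := by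
    funext x y
    simp only [ridge, mul_add, mul_assoc]
  have hu : A * cos θ * p.1 + A * sin θ * p.2 + B = A * (cos θ * p.1 + sin θ * p.2) + B := by ring
  have hode := iter_deriv_three_log_one_add_tan_sq (hu ▸ hcos p hp)
  rw [hridge, E1_ridge, E2_ridge, hode]
  simp only [sub_self, mul_zero, and_self]

theorem stmt4 (A B θ : ℝ) (hA : A ≠ 0) (U : Set (ℝ × ℝ)) (hU : IsOpen U)
    (hcos : ∀ p ∈ U, Real.cos (A * (Real.cos θ * p.1 + Real.sin θ * p.2) + B) ≠ 0) :
    ∀ p ∈ U,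
      E1 (fun x y => Real.log (1 + Real.tan (A * (Real.cos θ * x + Real.sin θ * y) + B)^2)) p.1 p.2 = 0 ∧
      E2 (fun x y => Real.log (1 + Real.tan (A * (Real.cos θ * x + Real.sin θ * y) + B)^2)) p.1 p.2 = 0 :=
  stmt4_general A B θ U hcos
end

section
/- Let A, B, C, D ∈ ℝ with A² + B² ≠ 0, and let U ⊆ ℝ² be an open set on which cos(A·x+C) ≠ 0 and cos(B·y+D) ≠ 0. Define f : U → ℝ by f(x,y) = log((1 + tan(A·x+C)²)·(1 + tan(B·y+D)²)). Then f satisfies f_x·f_{xx} + f_y·f_{xy} − f_{xxx} − f_{xyy} = 0 and f_x·f_{yx} + f_y·f_{yy} − f_{yxx} − f_{yyy} = 0 on U. -/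
/-!
Since `(1 + tan² u)(1 + tan² v)` is a product, `f(x, y) = g(x) + h(y)` with
`g(t) = log (1 + tan² (A t + C))`, so all mixed derivatives vanish and the two equations reduce to
`g''' = g' g''` and `h''' = h' h''`. Now `u = g' = 2A tan (A t + C)` solves the Riccati equation
`u' = u² / 2 + 2A²`, and differentiating it once more gives `u'' = u u'`.
-/

open Filter Topology

section Separable

variable (g h : ℝ → ℝ)

lemma dx_add_sep : dx (fun x y => g x + h y) = fun x _ => deriv g x := by
  funext x y
  exact deriv_add_const _

lemma dy_add_sep : dy (fun x y => g x + h y) = fun _ y => deriv h y := by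
  funext x y
  exact deriv_const_add _

lemma dx_of_fst : dx (fun x (_ : ℝ) => g x) = fun x _ => deriv g x := rfl

lemma dy_of_snd : dy (fun (_ : ℝ) y => h y) = fun _ y => deriv h y := rfl

lemma dy_of_fst : dy (fun x (_ : ℝ) => g x) = 0 := by
  funext x y
  exact deriv_const _ _

lemma dx_of_snd : dx (fun (_ : ℝ) y => h y) = 0 := by
  funext x y
  exact deriv_const _ _

lemma dx_zero : dx 0 = 0 := dx_of_snd 0

lemma dy_zero : dy 0 = 0 := dy_of_fst 0

lemma E1_add_sep (x y : ℝ) :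
    E1 (fun x y => g x + h y) x y
      = deriv g x * deriv (deriv g) x - deriv (deriv (deriv g)) x := by
  simp only [E1, dx_add_sep, dy_add_sep, dx_of_fst, dy_of_fst, dy_zero, Pi.zero_apply,
    mul_zero, add_zero, sub_zero]

lemma E2_add_sep (x y : ℝ) :
    E2 (fun x y => g x + h y) x y
      = deriv h y * deriv (deriv h) y - deriv (deriv (deriv h)) y := by
  simp only [E2, dx_add_sep, dy_add_sep, dx_of_snd, dy_of_snd, dx_zero, Pi.zero_apply,
    mul_zero, zero_add, sub_zero]

end Separable

lemma deriv_deriv_deriv_eq_of_riccati {g u : ℝ → ℝ} {k x : ℝ}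
    (hg : ∀ᶠ t in 𝓝 x, HasDerivAt g (u t) t)
    (hu : ∀ᶠ t in 𝓝 x, HasDerivAt u (u t ^ 2 / 2 + k) t) :
    deriv (deriv (deriv g)) x = deriv g x * deriv (deriv g) x := by
  have hg' : deriv g =ᶠ[𝓝 x] u := hg.mono fun t ht => ht.deriv
  have hgg : deriv (deriv g) =ᶠ[𝓝 x] fun t => u t ^ 2 / 2 + k :=
    hg'.deriv.trans (hu.mono fun t ht => ht.deriv)
  have hu2 : HasDerivAt (fun t => u t ^ 2 / 2 + k) (u x * (u x ^ 2 / 2 + k)) x := by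
    refine (((hu.self_of_nhds.fun_pow 2).div_const 2).add_const k).congr_deriv ?_
    norm_num
    ring
  rw [hgg.deriv_eq, hgg.self_of_nhds, hg'.self_of_nhds, hu2.deriv]

section LogOneAddTanSq

variable {a c x : ℝ}

lemma hasDerivAt_tan_affine (h : Real.cos (a * x + c) ≠ 0) :
    HasDerivAt (fun t => Real.tan (a * t + c)) (a * (1 + Real.tan (a * x + c) ^ 2)) x := by
  have hlin : HasDerivAt (fun t : ℝ => a * t + c) a x := by
    simpa using ((hasDerivAt_id x).const_mul a).add_const c
  refine ((Real.hasDerivAt_tan h).comp x hlin).congr_deriv ?_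
  rw [Real.tan_eq_sin_div_cos]
  field_simp
  rw [Real.cos_sq_add_sin_sq, mul_one]

lemma hasDerivAt_log_one_add_tan_sq (h : Real.cos (a * x + c) ≠ 0) :
    HasDerivAt (fun t => Real.log (1 + Real.tan (a * t + c) ^ 2))
      (2 * a * Real.tan (a * x + c)) x := by
  have hpos : 0 < 1 + Real.tan (a * x + c) ^ 2 := by positivity
  refine ((Real.hasDerivAt_log hpos.ne').comp x
    (((hasDerivAt_tan_affine h).pow 2).const_add 1)).congr_deriv ?_
  field_simp
  ring

lemma eventually_cos_affine_ne_zero (h : Real.cos (a * x + c) ≠ 0) :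
    ∀ᶠ t in 𝓝 x, Real.cos (a * t + c) ≠ 0 :=
  (by fun_prop : Continuous fun t => Real.cos (a * t + c)).continuousAt.eventually_ne h

lemma deriv_deriv_deriv_log_one_add_tan_sq (h : Real.cos (a * x + c) ≠ 0) :
    deriv (deriv (deriv fun t => Real.log (1 + Real.tan (a * t + c) ^ 2))) x
      = deriv (fun t => Real.log (1 + Real.tan (a * t + c) ^ 2)) x
        * deriv (deriv fun t => Real.log (1 + Real.tan (a * t + c) ^ 2)) x := by
  refine deriv_deriv_deriv_eq_of_riccati (k := 2 * a ^ 2)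
    ((eventually_cos_affine_ne_zero h).mono fun t ht => hasDerivAt_log_one_add_tan_sq ht)
    ((eventually_cos_affine_ne_zero h).mono fun t ht => ?_)
  refine ((hasDerivAt_tan_affine ht).const_mul (2 * a)).congr_deriv ?_
  ring

end LogOneAddTanSq

theorem stmt5_general (A B C D : ℝ) (U : Set (ℝ × ℝ))
    (hcos1 : ∀ p ∈ U, Real.cos (A * p.1 + C) ≠ 0)
    (hcos2 : ∀ p ∈ U, Real.cos (B * p.2 + D) ≠ 0) :
    ∀ p ∈ U,
      E1 (fun x y => Real.log ((1 + Real.tan (A * x + C)^2) * (1 + Real.tan (B * y + D)^2))) p.1 p.2 = 0 ∧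
      E2 (fun x y => Real.log ((1 + Real.tan (A * x + C)^2) * (1 + Real.tan (B * y + D)^2))) p.1 p.2 = 0 := by
  intro p hp
  have hsep : (fun x y => Real.log ((1 + Real.tan (A * x + C)^2) * (1 + Real.tan (B * y + D)^2)))
      = fun x y => Real.log (1 + Real.tan (A * x + C)^2) + Real.log (1 + Real.tan (B * y + D)^2) := by
    funext x y
    exact Real.log_mul (by positivity) (by positivity)
  rw [hsep, E1_add_sep, E2_add_sep, deriv_deriv_deriv_log_one_add_tan_sq (hcos1 p hp),
    deriv_deriv_deriv_log_one_add_tan_sq (hcos2 p hp)]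
  exact ⟨sub_self _, sub_self _⟩

theorem stmt5 (A B C D : ℝ) (hAB : A^2 + B^2 ≠ 0) (U : Set (ℝ × ℝ)) (hU : IsOpen U)
    (hcos1 : ∀ p ∈ U, Real.cos (A * p.1 + C) ≠ 0)
    (hcos2 : ∀ p ∈ U, Real.cos (B * p.2 + D) ≠ 0) :
    ∀ p ∈ U,
      E1 (fun x y => Real.log ((1 + Real.tan (A * x + C)^2) * (1 + Real.tan (B * y + D)^2))) p.1 p.2 = 0 ∧
      E2 (fun x y => Real.log ((1 + Real.tan (A * x + C)^2) * (1 + Real.tan (B * y + D)^2))) p.1 p.2 = 0 :=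
  stmt5_general A B C D U hcos1 hcos2
end

section
/- Let A, B, C, D ∈ ℝ with A² + B² ≠ 0, and let U ⊆ ℝ² be an open set on which (A·x+C)·(B·y+D) > 0. Define f : U → ℝ by f(x,y) = −2·log((A·x+C)·(B·y+D)). Then f satisfies f_x·f_{xx} + f_y·f_{xy} − f_{xxx} − f_{xyy} = 0 and f_x·f_{yx} + f_y·f_{yy} − f_{yxx} − f_{yyy} = 0 on U. -/
/-!
Where both factors are nonzero, `f = g(x) + h(y)` near the point with `g = -2 log(Ax + C)` and
`h = -2 log(By + D)`, so the mixed derivatives vanish and the two equations reduce to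
`g' g'' = g'''` and `h' h'' = h'''`. These hold because `v = g'` (and likewise `h'`) solves the
Riccati equation `v' = v² / 2`, whose derivative is `v'' = v v'`.
-/

open Filter Topology

section Locality

variable {f g : ℝ → ℝ → ℝ} {p : ℝ × ℝ}

theorem dx_eventuallyEq (h : ∀ᶠ q in 𝓝 p, f q.1 q.2 = g q.1 q.2) :
    ∀ᶠ q in 𝓝 p, dx f q.1 q.2 = dx g q.1 q.2 := by
  filter_upwards [h.eventually_nhds] with q hq
  exact EventuallyEq.deriv_eq (((Continuous.prodMk_left q.2).tendsto q.1).eventually hq)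

theorem dy_eventuallyEq (h : ∀ᶠ q in 𝓝 p, f q.1 q.2 = g q.1 q.2) :
    ∀ᶠ q in 𝓝 p, dy f q.1 q.2 = dy g q.1 q.2 := by
  filter_upwards [h.eventually_nhds] with q hq
  exact EventuallyEq.deriv_eq (((Continuous.prodMk_right q.1).tendsto q.2).eventually hq)

theorem E1_congr (h : ∀ᶠ q in 𝓝 p, f q.1 q.2 = g q.1 q.2) : E1 f p.1 p.2 = E1 g p.1 p.2 := by
  have hx := dx_eventuallyEq h
  simp only [E1, hx.self_of_nhds, (dx_eventuallyEq hx).self_of_nhds,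
    (dx_eventuallyEq (dx_eventuallyEq hx)).self_of_nhds, (dy_eventuallyEq h).self_of_nhds,
    (dy_eventuallyEq hx).self_of_nhds,
    (dy_eventuallyEq (dy_eventuallyEq hx)).self_of_nhds]

theorem E2_congr (h : ∀ᶠ q in 𝓝 p, f q.1 q.2 = g q.1 q.2) : E2 f p.1 p.2 = E2 g p.1 p.2 := by
  have hy := dy_eventuallyEq h
  simp only [E2, hy.self_of_nhds, (dx_eventuallyEq hy).self_of_nhds,
    (dx_eventuallyEq (dx_eventuallyEq hy)).self_of_nhds, (dx_eventuallyEq h).self_of_nhds,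
    (dy_eventuallyEq hy).self_of_nhds,
    (dy_eventuallyEq (dy_eventuallyEq hy)).self_of_nhds]

end Locality

section Separable

variable (g h : ℝ → ℝ) (x y : ℝ)

theorem E1_add_separable :
    E1 (fun x y => g x + h y) x y = deriv g x * deriv (deriv g) x - deriv (deriv (deriv g)) x := by
  simp [E1, dx, dy]

theorem E2_add_separable :
    E2 (fun x y => g x + h y) x y = deriv h y * deriv (deriv h) y - deriv (deriv (deriv h)) y := by
  simp [E2, dx, dy]

end Separable

theorem deriv_mul_deriv_deriv_eq_of_riccati {g : ℝ → ℝ} {t : ℝ}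
    (h : ∀ᶠ s in 𝓝 t, HasDerivAt (deriv g) (deriv g s ^ 2 / 2) s) :
    deriv g t * deriv (deriv g) t = deriv (deriv (deriv g)) t := by
  have hsecond : deriv (deriv g) =ᶠ[𝓝 t] fun s => deriv g s ^ 2 / 2 :=
    h.mono fun s hs => hs.deriv
  have hthird := ((h.self_of_nhds.pow 2).div_const 2).congr_of_eventuallyEq hsecond
  rw [hthird.deriv, hsecond.self_of_nhds]
  ring

theorem hasDerivAt_affine (a c t : ℝ) : HasDerivAt (fun s => a * s + c) a t := by
  simpa using ((hasDerivAt_id t).const_mul a).add_const c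

section LogAffine

variable {a c t : ℝ}

theorem hasDerivAt_neg_two_mul_log_affine (ht : a * t + c ≠ 0) :
    HasDerivAt (fun s => -2 * Real.log (a * s + c)) (-2 * a / (a * t + c)) t :=
  (((hasDerivAt_affine a c t).log ht).const_mul (-2)).congr_deriv (by ring)

theorem hasDerivAt_neg_two_mul_div_affine (ht : a * t + c ≠ 0) :
    HasDerivAt (fun s => -2 * a / (a * s + c)) ((-2 * a / (a * t + c)) ^ 2 / 2) t :=
  ((hasDerivAt_const t (-2 * a)).div (hasDerivAt_affine a c t) ht).congr_deriv
    (by field_simp; ring)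

theorem riccati_neg_two_mul_log_affine (ht : a * t + c ≠ 0) :
    ∀ᶠ s in 𝓝 t, HasDerivAt (deriv fun s => -2 * Real.log (a * s + c))
      ((deriv (fun s => -2 * Real.log (a * s + c)) s) ^ 2 / 2) s := by
  have hne : ∀ᶠ s in 𝓝 t, a * s + c ≠ 0 :=
    (continuous_const.mul continuous_id |>.add continuous_const).continuousAt.eventually_ne ht
  filter_upwards [hne.eventually_nhds] with s hs
  have hfirst :
      (deriv fun s => -2 * Real.log (a * s + c)) =ᶠ[𝓝 s] fun s => -2 * a / (a * s + c) :=
    hs.mono fun r hr => (hasDerivAt_neg_two_mul_log_affine hr).deriv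
  rw [hfirst.self_of_nhds]
  exact (hasDerivAt_neg_two_mul_div_affine hs.self_of_nhds).congr_of_eventuallyEq hfirst

end LogAffine

theorem stmt6_general (A B C D : ℝ) (U : Set (ℝ × ℝ))
    (hpos : ∀ p ∈ U, (A * p.1 + C) * (B * p.2 + D) > 0) :
    ∀ p ∈ U,
      E1 (fun x y => -2 * Real.log ((A * x + C) * (B * y + D))) p.1 p.2 = 0 ∧
      E2 (fun x y => -2 * Real.log ((A * x + C) * (B * y + D))) p.1 p.2 = 0 := by
  intro p hp
  have hfactors : ∀ᶠ q in 𝓝 p, A * q.1 + C ≠ 0 ∧ B * q.2 + D ≠ 0 := by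
    have hcont : Continuous fun q : ℝ × ℝ => (A * q.1 + C) * (B * q.2 + D) := by fun_prop
    filter_upwards [hcont.continuousAt.eventually_ne (hpos p hp).ne'] with q hq
    exact mul_ne_zero_iff.mp hq
  have hsplit : ∀ᶠ q in 𝓝 p, -2 * Real.log ((A * q.1 + C) * (B * q.2 + D))
      = -2 * Real.log (A * q.1 + C) + -2 * Real.log (B * q.2 + D) := by
    filter_upwards [hfactors] with q ⟨hx, hy⟩
    rw [Real.log_mul hx hy]
    ring
  obtain ⟨hx, hy⟩ := hfactors.self_of_nhds
  set g : ℝ → ℝ → ℝ := fun x y => -2 * Real.log (A * x + C) + -2 * Real.log (B * y + D)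
  rw [E1_congr (g := g) hsplit, E2_congr (g := g) hsplit, E1_add_separable, E2_add_separable,
    sub_eq_zero, sub_eq_zero]
  exact ⟨deriv_mul_deriv_deriv_eq_of_riccati (riccati_neg_two_mul_log_affine hx),
    deriv_mul_deriv_deriv_eq_of_riccati (riccati_neg_two_mul_log_affine hy)⟩

theorem stmt6 (A B C D : ℝ) (hAB : A^2 + B^2 ≠ 0) (U : Set (ℝ × ℝ)) (hU : IsOpen U)
    (hpos : ∀ p ∈ U, (A * p.1 + C) * (B * p.2 + D) > 0) :
    ∀ p ∈ U,
      E1 (fun x y => -2 * Real.log ((A * x + C) * (B * y + D))) p.1 p.2 = 0 ∧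
      E2 (fun x y => -2 * Real.log ((A * x + C) * (B * y + D))) p.1 p.2 = 0 :=
  stmt6_general A B C D U hpos
end

section
/- Let A, B, C, D ∈ ℝ satisfy A·C + B·D = 2·(A² + B²) ≠ 0. Define λ(x,y) = A·x + B·y and f(x,y) = C·x + D·y on ℝ². Then the pair (λ,f) satisfies D₁(λ,f) = 0 and D₂(λ,f) = 0, where D₁(λ,f) = (λ_x+f_x)(2λ_x f_x + f_{xx}) + (λ_y+f_y)(2λ_y f_x + f_{xy}) − (6λ_x² f_x + 2λ_{xx} f_x + 5λ_x f_{xx} + f_{xxx}) − (6λ_y² f_x + 2λ_{yy} f_x + 5λ_y f_{xy} + f_{xyy}) and D₂(λ,f) = (λ_x+f_x)(2λ_x f_y + f_{yx}) + (λ_y+f_y)(2λ_y f_y + f_{yy}) − (6λ_x² f_y + 2λ_{xx} f_y + 5λ_x f_{yx} + f_{yxx}) − (6λ_y² f_y + 2λ_{yy} f_y + 5λ_y f_{yy} + f_{yyy}); moreover (f_x, f_y) ≠ (0,0). -/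
/-- The operator `D₁` from the paper. -/
noncomputable def D1 (l f : ℝ → ℝ → ℝ) : ℝ → ℝ → ℝ := fun x y =>
  (dx l x y + dx f x y) * (2 * dx l x y * dx f x y + dx (dx f) x y)
  + (dy l x y + dy f x y) * (2 * dy l x y * dx f x y + dy (dx f) x y)
  - (6 * (dx l x y)^2 * dx f x y + 2 * dx (dx l) x y * dx f x y
      + 5 * dx l x y * dx (dx f) x y + dx (dx (dx f)) x y)
  - (6 * (dy l x y)^2 * dx f x y + 2 * dy (dy l) x y * dx f x y
      + 5 * dy l x y * dy (dx f) x y + dy (dy (dx f)) x y)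

/-- The operator `D₂` from the paper. -/
noncomputable def D2 (l f : ℝ → ℝ → ℝ) : ℝ → ℝ → ℝ := fun x y =>
  (dx l x y + dx f x y) * (2 * dx l x y * dy f x y + dx (dy f) x y)
  + (dy l x y + dy f x y) * (2 * dy l x y * dy f x y + dy (dy f) x y)
  - (6 * (dx l x y)^2 * dy f x y + 2 * dx (dx l) x y * dy f x y
      + 5 * dx l x y * dx (dy f) x y + dx (dx (dy f)) x y)
  - (6 * (dy l x y)^2 * dy f x y + 2 * dy (dy l) x y * dy f x y
      + 5 * dy l x y * dy (dy f) x y + dy (dy (dy f)) x y)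


lemma dx_lin (C D : ℝ) : dx (fun x y => C * x + D * y) = fun _ _ => C := by
  funext x y
  simpa [dx] using (((hasDerivAt_id x).const_mul C).add_const (D * y)).deriv

lemma dy_lin (C D : ℝ) : dy (fun x y => C * x + D * y) = fun _ _ => D := by
  funext x y
  simpa [dy] using ((((hasDerivAt_id y).const_mul D).const_add (C * x))).deriv

lemma dx_const (c : ℝ) : dx (fun _ _ => c) = fun _ _ => 0 := by
  funext x y; simp [dx]

lemma dy_const (c : ℝ) : dy (fun _ _ => c) = fun _ _ => 0 := by
  funext x y; simp [dy]

theorem stmt7 (A B C D : ℝ) (h : A * C + B * D = 2 * (A^2 + B^2)) (h0 : A^2 + B^2 ≠ 0) :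
    ∀ x y : ℝ,
      D1 (fun x y => A * x + B * y) (fun x y => C * x + D * y) x y = 0 ∧
      D2 (fun x y => A * x + B * y) (fun x y => C * x + D * y) x y = 0 ∧
      ¬ (dx (fun x y => C * x + D * y) x y = 0 ∧
          dy (fun x y => C * x + D * y) x y = 0) := by
  intro x y
  have hC : ¬ (C = 0 ∧ D = 0) := by
    rintro ⟨rfl, rfl⟩
    simp at h
    exact h0 (by linarith [sq_nonneg A, sq_nonneg B, h])
  refine ⟨?_, ?_, ?_⟩
  · simp only [D1, dx_lin, dy_lin, dx_const, dy_const]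
    linear_combination 2 * C * h
  · simp only [D2, dx_lin, dy_lin, dx_const, dy_const]
    linear_combination 2 * D * h
  · simp only [dx_lin, dy_lin]
    exact hC
end
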